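/- arXiv:2512.11106 — 3 statements merged into one kernel-verified Lean document; each statement's English description precedes it below -/
import Mathlib

section
/- For any two ellipsoids centered at the origin, E(0,M1) and E(0,M2) with M1, M2 positive definite, and any scalar p > 0, the Minkowski sum E(0,M1) ⊕ E(0,M2) is contained in the ellipsoid E(0, (1+p⁻¹)M1 + (1+p)M2). -/
open Matrix

/-- The ellipsoid centered at the origin with shape matrix `M`. -/
def ellipsoid {n : ℕ} (M : Matrix (Fin n) (Fin n) ℝ) : Set (Fin n → ℝ) :=
  {x | x ⬝ᵥ M⁻¹ *ᵥ x ≤ 1}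

/-- Cauchy–Schwarz for a real PSD quadratic form. -/
lemma psd_cauchy {n : ℕ} {A : Matrix (Fin n) (Fin n) ℝ} (hA : A.PosSemidef)
    (u v : Fin n → ℝ) : (u ⬝ᵥ A *ᵥ v) ^ 2 ≤ (u ⬝ᵥ A *ᵥ u) * (v ⬝ᵥ A *ᵥ v) := by
  set B := (open scoped MatrixOrder in CFC.sqrt A) with hBdef
  have hBt : Bᵀ = B := by
    have h := (open scoped MatrixOrder in (CFC.sqrt_nonneg A).posSemidef).isHermitian
    rwa [Matrix.IsHermitian, Matrix.conjTranspose_eq_transpose_of_trivial] at h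
  have key : ∀ a b : Fin n → ℝ, a ⬝ᵥ A *ᵥ b = (B *ᵥ a) ⬝ᵥ (B *ᵥ b) := by
    intro a b
    conv_lhs => rw [← (open scoped MatrixOrder in CFC.sqrt_mul_sqrt_self A hA.nonneg)]
    rw [← Matrix.mulVec_mulVec, Matrix.dotProduct_mulVec, ← Matrix.mulVec_transpose, hBt]
  rw [key u v, key u u, key v v]
  simpa [dotProduct, sq] using
    Finset.sum_mul_sq_le_sq_mul_sq Finset.univ (B *ᵥ u) (B *ᵥ v)

lemma key2 {n : ℕ} (C D : Matrix (Fin n) (Fin n) ℝ) (hC : C.PosDef) (hD : D.PosDef)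
    (x y : Fin n → ℝ) :
    (x + y) ⬝ᵥ (C + D)⁻¹ *ᵥ (x + y) ≤ x ⬝ᵥ C⁻¹ *ᵥ x + y ⬝ᵥ D⁻¹ *ᵥ y := by
  have hE : (C + D).PosDef := hC.add hD
  set z := (C + D)⁻¹ *ᵥ (x + y) with hz
  have hEz : (C + D) *ᵥ z = x + y := by
    rw [hz, Matrix.mulVec_mulVec, Matrix.mul_nonsing_inv _ (isUnit_iff_ne_zero.2 hE.det_pos.ne'),
      Matrix.one_mulVec]
  have hwC : C *ᵥ (C⁻¹ *ᵥ x) = x := by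
    rw [Matrix.mulVec_mulVec, Matrix.mul_nonsing_inv _ (isUnit_iff_ne_zero.2 hC.det_pos.ne'),
      Matrix.one_mulVec]
  have hwD : D *ᵥ (D⁻¹ *ᵥ y) = y := by
    rw [Matrix.mulVec_mulVec, Matrix.mul_nonsing_inv _ (isUnit_iff_ne_zero.2 hD.det_pos.ne'),
      Matrix.one_mulVec]
  set a := z ⬝ᵥ C *ᵥ z with ha
  set b := z ⬝ᵥ D *ᵥ z with hb
  set a' := x ⬝ᵥ C⁻¹ *ᵥ x with ha'
  set b' := y ⬝ᵥ D⁻¹ *ᵥ y with hb'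
  have hLHS : (x + y) ⬝ᵥ (C + D)⁻¹ *ᵥ (x + y) = a + b := by
    rw [← hz, dotProduct_comm, ← hEz, Matrix.add_mulVec, dotProduct_add]
  have hsum : a + b = z ⬝ᵥ x + z ⬝ᵥ y := by
    have : z ⬝ᵥ ((C + D) *ᵥ z) = z ⬝ᵥ (x + y) := by rw [hEz]
    rw [Matrix.add_mulVec, dotProduct_add, dotProduct_add] at this
    exact this
  have hCS1 : (z ⬝ᵥ x) ^ 2 ≤ a * a' := by
    have h := psd_cauchy hC.posSemidef z (C⁻¹ *ᵥ x)
    rw [hwC] at h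
    rwa [show (C⁻¹ *ᵥ x) ⬝ᵥ x = a' from dotProduct_comm _ _] at h
  have hCS2 : (z ⬝ᵥ y) ^ 2 ≤ b * b' := by
    have h := psd_cauchy hD.posSemidef z (D⁻¹ *ᵥ y)
    rw [hwD] at h
    rwa [show (D⁻¹ *ᵥ y) ⬝ᵥ y = b' from dotProduct_comm _ _] at h
  have hnn : ∀ (M : Matrix (Fin n) (Fin n) ℝ), M.PosSemidef → ∀ w : Fin n → ℝ,
      0 ≤ w ⬝ᵥ M *ᵥ w := by
    intro M hM w
    simpa using hM.dotProduct_mulVec_nonneg w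
  have ha0 : 0 ≤ a := hnn C hC.posSemidef z
  have hb0 : 0 ≤ b := hnn D hD.posSemidef z
  have ha'0 : 0 ≤ a' := hnn C⁻¹ hC.inv.posSemidef x
  have hb'0 : 0 ≤ b' := hnn D⁻¹ hD.inv.posSemidef y
  have h1 : z ⬝ᵥ x ≤ (a + a') / 2 := by nlinarith [sq_nonneg (a - a'), sq_nonneg (a + a')]
  have h2 : z ⬝ᵥ y ≤ (b + b') / 2 := by nlinarith [sq_nonneg (b - b'), sq_nonneg (b + b')]
  rw [hLHS]
  linarith

lemma posdef_smul {n : ℕ} {M : Matrix (Fin n) (Fin n) ℝ} (hM : M.PosDef) {c : ℝ}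
    (hc : 0 < c) : (c • M).PosDef := by
  refine Matrix.PosDef.of_dotProduct_mulVec_pos ?_ (fun x hx => ?_)
  · have h := hM.isHermitian
    rw [Matrix.IsHermitian] at h ⊢
    rw [Matrix.conjTranspose_eq_transpose_of_trivial] at h
    rw [Matrix.conjTranspose_eq_transpose_of_trivial, Matrix.transpose_smul, h]
  · have h := hM.dotProduct_mulVec_pos hx
    simp only [Matrix.smul_mulVec, dotProduct_smul] at *
    have : (0:ℝ) < x ⬝ᵥ M *ᵥ x := by simpa using h
    simpa [smul_eq_mul] using mul_pos hc this

theorem minkowski_sum_ellipsoid_subset {n : ℕ}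
    (M1 M2 : Matrix (Fin n) (Fin n) ℝ) (hM1 : M1.PosDef) (hM2 : M2.PosDef)
    (p : ℝ) (hp : 0 < p) :
    Set.image2 (· + ·) (ellipsoid M1) (ellipsoid M2) ⊆
      ellipsoid ((1 + p⁻¹) • M1 + (1 + p) • M2) := by
  rintro v ⟨x, hx, y, hy, rfl⟩
  have hc1 : (0:ℝ) < 1 + p⁻¹ := by positivity
  have hc2 : (0:ℝ) < 1 + p := by positivity
  have hC : ((1 + p⁻¹) • M1).PosDef := posdef_smul hM1 hc1
  have hD : ((1 + p) • M2).PosDef := posdef_smul hM2 hc2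
  simp only [ellipsoid, Set.mem_setOf_eq] at hx hy ⊢
  refine le_trans (key2 _ _ hC hD x y) ?_
  have hinv1 : ((1 + p⁻¹) • M1)⁻¹ = (1 + p⁻¹)⁻¹ • M1⁻¹ := by
    have := Matrix.inv_smul' (Units.mk0 (1 + p⁻¹) hc1.ne') (A := M1)
      (isUnit_iff_ne_zero.2 hM1.det_pos.ne')
    simpa [Units.smul_def] using this
  have hinv2 : ((1 + p) • M2)⁻¹ = (1 + p)⁻¹ • M2⁻¹ := by
    have := Matrix.inv_smul' (Units.mk0 (1 + p) hc2.ne') (A := M2)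
      (isUnit_iff_ne_zero.2 hM2.det_pos.ne')
    simpa [Units.smul_def] using this
  rw [hinv1, hinv2]
  simp only [Matrix.smul_mulVec, dotProduct_smul, smul_eq_mul]
  have e1 : (1 + p⁻¹)⁻¹ * (x ⬝ᵥ M1⁻¹ *ᵥ x) ≤ (1 + p⁻¹)⁻¹ :=
    by nlinarith [inv_pos.2 hc1]
  have e2 : (1 + p)⁻¹ * (y ⬝ᵥ M2⁻¹ *ᵥ y) ≤ (1 + p)⁻¹ :=
    by nlinarith [inv_pos.2 hc2]
  have hsum : (1 + p⁻¹)⁻¹ + (1 + p)⁻¹ = 1 := by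
    field_simp
    ring
  linarith
end

section
/- Let A be an invertible matrix, e ∈ E(0,M) and w ∈ E(0,Mw) with M, Mw positive definite, and let p > 0. Then Ae + w belongs to the ellipsoid E(0, (1+p⁻¹) A M Aᵀ + (1+p) Mw). -/
open Matrix

private lemma mulVec_dot {n : ℕ} (A : Matrix (Fin n) (Fin n) ℝ) (x y : Fin n → ℝ) :
    (A *ᵥ x) ⬝ᵥ y = x ⬝ᵥ (Aᵀ *ᵥ y) := by
  rw [dotProduct_comm, dotProduct_mulVec, ← mulVec_transpose, dotProduct_comm]

private lemma smul_posDef {n : ℕ} {c : ℝ} (hc : 0 < c) {N : Matrix (Fin n) (Fin n) ℝ}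
    (hN : N.PosDef) : (c • N).PosDef := by
  refine Matrix.PosDef.of_dotProduct_mulVec_pos ?_ (fun x hx => ?_)
  · unfold Matrix.IsHermitian
    rw [conjTranspose_smul, hN.1]
    simp
  · have := hN.dotProduct_mulVec_pos hx
    simp only [smul_mulVec, dotProduct_smul, smul_eq_mul]
    positivity

private lemma congr_posDef {n : ℕ} {A M : Matrix (Fin n) (Fin n) ℝ}
    (hA : IsUnit A) (hM : M.PosDef) : (A * M * Aᵀ).PosDef := by
  refine Matrix.PosDef.of_dotProduct_mulVec_pos ?_ (fun x hx => ?_)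
  · unfold Matrix.IsHermitian
    rw [conjTranspose_mul, conjTranspose_mul]
    have hMt : Mᵀ = M := (by simpa using hM.1 : M.IsSymm).eq
    simp [Matrix.mul_assoc, hMt]
  · have hAdet : IsUnit A.det := (Matrix.isUnit_iff_isUnit_det A).mp hA
    have hATx : Aᵀ *ᵥ x ≠ 0 := by
      intro h
      have : Aᵀ⁻¹ *ᵥ (Aᵀ *ᵥ x) = 0 := by rw [h, mulVec_zero]
      rw [mulVec_mulVec, Matrix.nonsing_inv_mul _ (by rwa [det_transpose]), one_mulVec] at this
      exact hx this
    have := hM.dotProduct_mulVec_pos hATx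
    have key : star x ⬝ᵥ (A * M * Aᵀ) *ᵥ x = star (Aᵀ *ᵥ x) ⬝ᵥ M *ᵥ (Aᵀ *ᵥ x) := by
      simp only [star_trivial, ← mulVec_mulVec]
      rw [dotProduct_comm, mulVec_dot, dotProduct_comm]
    rwa [key]

private lemma key_ineq {n : ℕ} {N1 N2 : Matrix (Fin n) (Fin n) ℝ}
    (h1 : N1.PosDef) (h2 : N2.PosDef) (u v : Fin n → ℝ) :
    (u + v) ⬝ᵥ (N1 + N2)⁻¹ *ᵥ (u + v) ≤ u ⬝ᵥ N1⁻¹ *ᵥ u + v ⬝ᵥ N2⁻¹ *ᵥ v := by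
  have hS : (N1 + N2).PosDef := h1.add h2
  set S := N1 + N2 with hSdef
  set t : Fin n → ℝ := S⁻¹ *ᵥ (u + v) with ht
  set r : Fin n → ℝ := u - N1 *ᵥ t with hr
  have hSdet : IsUnit S.det := hS.det_pos.ne'.isUnit
  have h1det : IsUnit N1.det := h1.det_pos.ne'.isUnit
  have h2det : IsUnit N2.det := h2.det_pos.ne'.isUnit
  have hSt : S *ᵥ t = u + v := by
    rw [ht, mulVec_mulVec, Matrix.mul_nonsing_inv _ hSdet, one_mulVec]
  have hu : u = N1 *ᵥ t + r := by rw [hr]; abel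
  have hv : v = N2 *ᵥ t - r := by
    have : N1 *ᵥ t + N2 *ᵥ t = u + v := by rw [← add_mulVec, ← hSdef, hSt]
    have hv' : v = (N1 *ᵥ t + N2 *ᵥ t) - u := by rw [this]; abel
    rw [hv', hr]; abel
  -- N1⁻¹ *ᵥ u and N2⁻¹ *ᵥ v
  have hinv1 : N1⁻¹ *ᵥ u = t + N1⁻¹ *ᵥ r := by
    rw [hu, mulVec_add, mulVec_mulVec, Matrix.nonsing_inv_mul _ h1det, one_mulVec]
  have hinv2 : N2⁻¹ *ᵥ v = t - N2⁻¹ *ᵥ r := by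
    rw [hv, mulVec_sub, mulVec_mulVec, Matrix.nonsing_inv_mul _ h2det, one_mulVec]
  have cross1 : (N1 *ᵥ t) ⬝ᵥ (N1⁻¹ *ᵥ r) = t ⬝ᵥ r := by
    rw [mulVec_dot, mulVec_mulVec, show N1ᵀ = N1 from (by simpa using h1.1 : N1.IsSymm).eq,
      Matrix.mul_nonsing_inv _ h1det, one_mulVec]
  have cross2 : (N2 *ᵥ t) ⬝ᵥ (N2⁻¹ *ᵥ r) = t ⬝ᵥ r := by
    rw [mulVec_dot, mulVec_mulVec, show N2ᵀ = N2 from (by simpa using h2.1 : N2.IsSymm).eq,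
      Matrix.mul_nonsing_inv _ h2det, one_mulVec]
  have lhs_eq : (u + v) ⬝ᵥ (N1 + N2)⁻¹ *ᵥ (u + v) = (N1 *ᵥ t) ⬝ᵥ t + (N2 *ᵥ t) ⬝ᵥ t := by
    rw [← hSdef, ← ht, ← hSt]
    rw [hSdef, add_mulVec, add_dotProduct]
  have rhs1 : u ⬝ᵥ N1⁻¹ *ᵥ u = (N1 *ᵥ t) ⬝ᵥ t + t ⬝ᵥ r + r ⬝ᵥ t + r ⬝ᵥ (N1⁻¹ *ᵥ r) := by
    rw [hinv1]
    nth_rewrite 1 [hu]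
    rw [add_dotProduct, dotProduct_add, dotProduct_add, cross1]
    ring
  have rhs2 : v ⬝ᵥ N2⁻¹ *ᵥ v = (N2 *ᵥ t) ⬝ᵥ t - t ⬝ᵥ r - r ⬝ᵥ t + r ⬝ᵥ (N2⁻¹ *ᵥ r) := by
    rw [hinv2]
    nth_rewrite 1 [hv]
    rw [sub_dotProduct, dotProduct_sub, dotProduct_sub, cross2]
    ring
  have nn1 : 0 ≤ r ⬝ᵥ (N1⁻¹ *ᵥ r) := by
    have := h1.inv.posSemidef.dotProduct_mulVec_nonneg r
    simpa using this
  have nn2 : 0 ≤ r ⬝ᵥ (N2⁻¹ *ᵥ r) := by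
    have := h2.inv.posSemidef.dotProduct_mulVec_nonneg r
    simpa using this
  rw [lhs_eq, rhs1, rhs2]
  linarith

theorem prediction_step_membership {n : ℕ}
    (A M Mw : Matrix (Fin n) (Fin n) ℝ) (hA : IsUnit A)
    (hM : M.PosDef) (hMw : Mw.PosDef)
    (e w : Fin n → ℝ) (he : e ∈ ellipsoid M) (hw : w ∈ ellipsoid Mw)
    (p : ℝ) (hp : 0 < p) :
    A *ᵥ e + w ∈ ellipsoid ((1 + p⁻¹) • (A * M * Aᵀ) + (1 + p) • Mw) := by
  have hc1 : (0:ℝ) < 1 + p⁻¹ := by positivity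
  have hc2 : (0:ℝ) < 1 + p := by positivity
  have hAMA : (A * M * Aᵀ).PosDef := congr_posDef hA hM
  have hN1 : ((1 + p⁻¹) • (A * M * Aᵀ)).PosDef := smul_posDef hc1 hAMA
  have hN2 : ((1 + p) • Mw).PosDef := smul_posDef hc2 hMw
  have hAdet : IsUnit A.det := (Matrix.isUnit_iff_isUnit_det A).mp hA
  have key := key_ineq hN1 hN2 (A *ᵥ e) w
  -- compute the first term
  haveI : Invertible (1 + p⁻¹) := invertibleOfNonzero hc1.ne'
  haveI : Invertible (1 + p) := invertibleOfNonzero hc2.ne'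
  have e1 : (A *ᵥ e) ⬝ᵥ ((1 + p⁻¹) • (A * M * Aᵀ))⁻¹ *ᵥ (A *ᵥ e)
      = (1 + p⁻¹)⁻¹ * (e ⬝ᵥ M⁻¹ *ᵥ e) := by
    rw [Matrix.inv_smul (A * M * Aᵀ) (1 + p⁻¹) hAMA.det_pos.ne'.isUnit, invOf_eq_inv]
    · rw [smul_mulVec, dotProduct_smul, smul_eq_mul]
      congr 1
      rw [Matrix.mul_inv_rev, Matrix.mul_inv_rev]
      rw [← mulVec_mulVec, ← mulVec_mulVec, mulVec_mulVec e A⁻¹ A,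
        Matrix.nonsing_inv_mul _ hAdet, one_mulVec]
      rw [mulVec_dot, mulVec_mulVec (M⁻¹ *ᵥ e) Aᵀ Aᵀ⁻¹,
        Matrix.mul_nonsing_inv Aᵀ (by rwa [det_transpose]), one_mulVec]
  have e2 : w ⬝ᵥ ((1 + p) • Mw)⁻¹ *ᵥ w = (1 + p)⁻¹ * (w ⬝ᵥ Mw⁻¹ *ᵥ w) := by
    rw [Matrix.inv_smul Mw (1 + p) hMw.det_pos.ne'.isUnit, invOf_eq_inv,
      smul_mulVec, dotProduct_smul, smul_eq_mul]
  have hsum : (1 + p⁻¹)⁻¹ * (e ⬝ᵥ M⁻¹ *ᵥ e) + (1 + p)⁻¹ * (w ⬝ᵥ Mw⁻¹ *ᵥ w)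
      ≤ (1 + p⁻¹)⁻¹ + (1 + p)⁻¹ := by
    have h1 : e ⬝ᵥ M⁻¹ *ᵥ e ≤ 1 := he
    have h2 : w ⬝ᵥ Mw⁻¹ *ᵥ w ≤ 1 := hw
    have i1 : (0:ℝ) < (1 + p⁻¹)⁻¹ := by positivity
    have i2 : (0:ℝ) < (1 + p)⁻¹ := by positivity
    nlinarith
  have hone : (1 + p⁻¹)⁻¹ + (1 + p)⁻¹ = 1 := by
    field_simp
    ring
  show (A *ᵥ e + w) ⬝ᵥ ((1 + p⁻¹) • (A * M * Aᵀ) + (1 + p) • Mw)⁻¹ *ᵥ (A *ᵥ e + w) ≤ 1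
  calc (A *ᵥ e + w) ⬝ᵥ ((1 + p⁻¹) • (A * M * Aᵀ) + (1 + p) • Mw)⁻¹ *ᵥ (A *ᵥ e + w)
      ≤ (A *ᵥ e) ⬝ᵥ ((1 + p⁻¹) • (A * M * Aᵀ))⁻¹ *ᵥ (A *ᵥ e)
        + w ⬝ᵥ ((1 + p) • Mw)⁻¹ *ᵥ w := key
    _ = (1 + p⁻¹)⁻¹ * (e ⬝ᵥ M⁻¹ *ᵥ e) + (1 + p)⁻¹ * (w ⬝ᵥ Mw⁻¹ *ᵥ w) := by rw [e1, e2]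
    _ ≤ (1 + p⁻¹)⁻¹ + (1 + p)⁻¹ := hsum
    _ = 1 := hone
end

section
/- Define V(Γ) = tr[(I-ΓH)P(I-ΓH)ᵀ + Γ Pv Γᵀ] + (q⁻¹+1) tr[(I-ΓH)M(I-ΓH)ᵀ] + (q+1) tr[Γ Mv Γᵀ], where P, M are positive semidefinite, Pv, Mv are positive definite, and q > 0 is fixed. Then V is minimized over matrices Γ at Γ* = [P Hᵀ + (q⁻¹+1) M Hᵀ] · [H P Hᵀ + Pv + (q⁻¹+1) H M Hᵀ + (q+1) Mv]⁻¹, and this is the unique stationary point of V. -/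
open Matrix

private lemma aux_smul_psd {k : ℕ} {c : ℝ} (hc : 0 ≤ c) {M : Matrix (Fin k) (Fin k) ℝ}
    (hM : M.PosSemidef) : (c • M).PosSemidef := by
  refine ⟨?_, fun x => ?_⟩
  · unfold Matrix.IsHermitian
    rw [conjTranspose_smul, star_trivial, hM.1.eq]
  · exact (hM.smul hc).2 x

private lemma aux_trace_sum {k l : ℕ} (R : Matrix (Fin l) (Fin l) ℝ)
    (D : Matrix (Fin k) (Fin l) ℝ) :
    (D * R * Dᵀ).trace = ∑ i, (D i) ⬝ᵥ (R *ᵥ (D i)) := by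
  simp only [Matrix.trace, Matrix.diag, Matrix.mul_apply, Matrix.transpose_apply,
    dotProduct, Matrix.mulVec, Finset.sum_mul, Finset.mul_sum]
  refine Finset.sum_congr rfl fun i _ => ?_
  rw [Finset.sum_comm]
  refine Finset.sum_congr rfl fun j _ => Finset.sum_congr rfl fun l _ => by ring

private lemma aux_trace_nonneg {k l : ℕ} {R : Matrix (Fin l) (Fin l) ℝ} (hR : R.PosSemidef)
    (D : Matrix (Fin k) (Fin l) ℝ) : 0 ≤ (D * R * Dᵀ).trace := by
  rw [aux_trace_sum]
  exact Finset.sum_nonneg fun i _ => by simpa using hR.dotProduct_mulVec_nonneg (D i)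

private lemma aux_trace_zero {k l : ℕ} {R : Matrix (Fin l) (Fin l) ℝ} (hR : R.PosDef)
    (D : Matrix (Fin k) (Fin l) ℝ) (h : (D * R * Dᵀ).trace = 0) : D = 0 := by
  rw [aux_trace_sum] at h
  have h2 := (Finset.sum_eq_zero_iff_of_nonneg
    (fun i _ => by simpa using hR.posSemidef.dotProduct_mulVec_nonneg (D i))).mp h
  ext i j
  by_contra hne
  have hDi : D i ≠ 0 := fun h0 => hne (by simp [h0])
  have := hR.dotProduct_mulVec_pos hDi
  simp only [star_trivial] at this
  exact (this.ne' (h2 i (Finset.mem_univ i))).elim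

theorem optimal_gain_minimizes {n m : ℕ}
    (P M : Matrix (Fin n) (Fin n) ℝ) (hP : P.PosSemidef) (hM : M.PosSemidef)
    (Pv Mv : Matrix (Fin m) (Fin m) ℝ) (hPv : Pv.PosDef) (hMv : Mv.PosDef)
    (H : Matrix (Fin m) (Fin n) ℝ) (q : ℝ) (hq : 0 < q)
    (V : Matrix (Fin n) (Fin m) ℝ → ℝ)
    (hV : ∀ Γ, V Γ =
      ((1 - Γ * H) * P * (1 - Γ * H)ᵀ + Γ * Pv * Γᵀ).trace
        + (q⁻¹ + 1) * ((1 - Γ * H) * M * (1 - Γ * H)ᵀ).trace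
        + (q + 1) * (Γ * Mv * Γᵀ).trace)
    (Γstar : Matrix (Fin n) (Fin m) ℝ)
    (hΓstar : Γstar =
      (P * Hᵀ + (q⁻¹ + 1) • (M * Hᵀ)) *
        (H * P * Hᵀ + Pv + (q⁻¹ + 1) • (H * M * Hᵀ) + (q + 1) • Mv)⁻¹) :
    (∀ Γ, V Γstar ≤ V Γ) ∧
    (∀ Γ : Matrix (Fin n) (Fin m) ℝ,
      (∀ Δ : Matrix (Fin n) (Fin m) ℝ,
        HasDerivAt (fun t : ℝ => V (Γ + t • Δ)) 0 0) ↔ Γ = Γstar) := by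
  have hc1 : (0:ℝ) ≤ q⁻¹ + 1 := by positivity
  have hc2 : (0:ℝ) ≤ q + 1 := by positivity
  set A : Matrix (Fin n) (Fin n) ℝ := P + (q⁻¹ + 1) • M with hAdef
  set B : Matrix (Fin m) (Fin m) ℝ := Pv + (q + 1) • Mv with hBdef
  set C : Matrix (Fin n) (Fin m) ℝ := A * Hᵀ with hCdef
  set Rm : Matrix (Fin m) (Fin m) ℝ := H * A * Hᵀ + B with hRdef
  have hA : A.PosSemidef := hP.add (aux_smul_psd hc1 hM)
  have hB : B.PosDef := hPv.add_posSemidef (aux_smul_psd hc2 hMv.posSemidef)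
  have hHAH : (H * A * Hᵀ).PosSemidef := by
    have := hA.mul_mul_conjTranspose_same H
    rwa [conjTranspose_eq_transpose_of_trivial] at this
  have hRm : Rm.PosDef := Matrix.PosDef.posSemidef_add hHAH hB
  have hRsym : Rmᵀ = Rm := by
    rw [← conjTranspose_eq_transpose_of_trivial]; exact hRm.1
  have hdet : IsUnit Rm.det := hRm.det_pos.ne'.isUnit
  have e1 : P * Hᵀ + (q⁻¹ + 1) • (M * Hᵀ) = C := by
    rw [hCdef, hAdef, Matrix.add_mul, Matrix.smul_mul]
  have e2 : H * P * Hᵀ + Pv + (q⁻¹ + 1) • (H * M * Hᵀ) + (q + 1) • Mv = Rm := by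
    rw [hRdef, hAdef, hBdef]
    simp only [Matrix.mul_add, Matrix.add_mul, Matrix.mul_smul, Matrix.smul_mul]
    abel
  have hΓs : Γstar = C * Rm⁻¹ := by rw [hΓstar, e1, e2]
  have hCR : Γstar * Rm = C := by
    rw [hΓs, Matrix.mul_assoc, Matrix.nonsing_inv_mul _ hdet, Matrix.mul_one]
  have hswap : ∀ (X Y : Matrix (Fin n) (Fin m) ℝ),
      (X * Rm * Yᵀ).trace = (Y * Rm * Xᵀ).trace := by
    intro X Y
    rw [← trace_transpose (X * Rm * Yᵀ)]
    simp [Matrix.transpose_mul, hRsym, Matrix.mul_assoc]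
  have hstarX : ∀ (X : Matrix (Fin n) (Fin m) ℝ),
      (Γstar * Rm * Xᵀ).trace = (C * Xᵀ).trace := by
    intro X; rw [hCR]
  have key1 : ∀ Γ, V Γ = A.trace - 2*(C*Γᵀ).trace + (Γ * Rm * Γᵀ).trace := by
    intro Γ
    rw [hV, hAdef, hCdef, hRdef, hBdef, hAdef]
    have h1 : (Γ * (H * P)).trace = (P * (Hᵀ * Γᵀ)).trace := by
      rw [← trace_transpose (Γ * (H * P))]
      simp [Matrix.transpose_mul, hP.1.eq, Matrix.mul_assoc,
        ← Matrix.conjTranspose_eq_transpose_of_trivial]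
    have h2 : (Γ * (H * M)).trace = (M * (Hᵀ * Γᵀ)).trace := by
      rw [← trace_transpose (Γ * (H * M))]
      simp [Matrix.transpose_mul, hM.1.eq, Matrix.mul_assoc,
        ← Matrix.conjTranspose_eq_transpose_of_trivial]
    simp only [Matrix.sub_mul, Matrix.mul_sub, Matrix.add_mul, Matrix.mul_add,
      Matrix.one_mul, Matrix.mul_one, transpose_sub, transpose_one, transpose_mul,
      smul_mul_assoc, mul_smul_comm, Matrix.smul_mul, Matrix.mul_smul, transpose_smul,
      trace_add, trace_sub, trace_smul, smul_eq_mul, Matrix.mul_assoc]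
    linear_combination -h1 - (q⁻¹+1) * h2
  have key2 : ∀ Γ, V Γ = (A.trace - (C * Γstarᵀ).trace)
      + ((Γ - Γstar) * Rm * (Γ - Γstar)ᵀ).trace := by
    intro Γ
    rw [key1]
    have h3 : (Γ * Rm * Γstarᵀ).trace = (C * Γᵀ).trace := by
      rw [hswap Γ Γstar, hstarX Γ]
    have h4 : (Γstar * Rm * Γstarᵀ).trace = (C * Γstarᵀ).trace := hstarX Γstar
    have h5 : (Γstar * Rm * Γᵀ).trace = (C * Γᵀ).trace := hstarX Γ
    simp only [Matrix.sub_mul, Matrix.mul_sub, transpose_sub, trace_sub]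
    linear_combination h3 + h5 - h4
  refine ⟨?_, ?_⟩
  · intro Γ
    rw [key2 Γ, key2 Γstar]
    simp only [sub_self, Matrix.zero_mul, trace_zero, add_zero]
    have := aux_trace_nonneg hRm.posSemidef (Γ - Γstar)
    linarith
  · intro Γ
    set D : Matrix (Fin n) (Fin m) ℝ := Γ - Γstar with hDdef
    have hpoly : ∀ (Δ : Matrix (Fin n) (Fin m) ℝ) (t : ℝ),
        V (Γ + t • Δ) = ((A.trace - (C * Γstarᵀ).trace) + (D * Rm * Dᵀ).trace)
          + (2 * (Δ * Rm * Dᵀ).trace) * t + ((Δ * Rm * Δᵀ).trace) * t ^ 2 := by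
      intro Δ t
      rw [key2]
      have hDt : Γ + t • Δ - Γstar = D + t • Δ := by rw [hDdef]; abel
      rw [hDt]
      have h6 : (D * Rm * Δᵀ).trace = (Δ * Rm * Dᵀ).trace := hswap D Δ
      simp only [Matrix.add_mul, Matrix.mul_add, transpose_add, transpose_smul,
        smul_mul_assoc, mul_smul_comm, Matrix.smul_mul, Matrix.mul_smul,
        trace_add, trace_smul, smul_eq_mul]
      linear_combination t * h6
    have hder : ∀ (Δ : Matrix (Fin n) (Fin m) ℝ),
        HasDerivAt (fun t : ℝ => V (Γ + t • Δ)) (2 * (Δ * Rm * Dᵀ).trace) 0 := by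
      intro Δ
      have h0 : HasDerivAt (fun t : ℝ =>
          ((A.trace - (C * Γstarᵀ).trace) + (D * Rm * Dᵀ).trace)
            + (2 * (Δ * Rm * Dᵀ).trace) * t + ((Δ * Rm * Δᵀ).trace) * t ^ 2)
          (2 * (Δ * Rm * Dᵀ).trace) 0 := by
        have := (((hasDerivAt_id (0:ℝ)).const_mul (2 * (Δ * Rm * Dᵀ).trace)).const_add
          ((A.trace - (C * Γstarᵀ).trace) + (D * Rm * Dᵀ).trace)).add
          ((hasDerivAt_pow 2 (0:ℝ)).const_mul ((Δ * Rm * Δᵀ).trace))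
        simpa [Pi.add_def] using this
      have heq : (fun t : ℝ => V (Γ + t • Δ)) = fun t : ℝ =>
          ((A.trace - (C * Γstarᵀ).trace) + (D * Rm * Dᵀ).trace)
            + (2 * (Δ * Rm * Dᵀ).trace) * t + ((Δ * Rm * Δᵀ).trace) * t ^ 2 :=
        funext fun t => hpoly Δ t
      rw [heq]
      exact h0
    constructor
    · intro h
      have huniq : 2 * (D * Rm * Dᵀ).trace = 0 := (hder D).unique (h D)
      have htr : (D * Rm * Dᵀ).trace = 0 := by linarith
      have hD0 : D = 0 := aux_trace_zero hRm D htr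
      rw [hDdef] at hD0
      exact sub_eq_zero.mp hD0
    · intro hG Δ
      have hD0 : D = 0 := by rw [hDdef, hG, sub_self]
      have := hder Δ
      rw [hD0] at this
      simpa using this
end
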